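/- Let F be a closed transitive relation on a locally compact, σ-compact Hausdorff space X, and let x ∈ X with (x,x) ∉ F. Then there exists a compact neighborhood U of x (x lies in the interior of U) such that the three sets U, F(U), and F⁻¹(U) are pairwise disjoint. -/

import Mathlib

/-- The image of a set `A` under a relation `f ⊆ X × Y`. -/
def relImage {X Y : Type*} (f : Set (X × Y)) (A : Set X) : Set Y :=
  {y | ∃ x ∈ A, (x, y) ∈ f}

/-- The reverse (inverse) relation of `f ⊆ X × Y`. -/
def relInv {X Y : Type*} (f : Set (X × Y)) : Set (Y × X) :=
  {p | (p.2, p.1) ∈ f}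

/-- Composition of relations: `relComp g f = g ∘ f` (first `f`, then `g`). -/
def relComp {X Y Z : Type*} (g : Set (Y × Z)) (f : Set (X × Y)) : Set (X × Z) :=
  {p | ∃ y, (p.1, y) ∈ f ∧ (y, p.2) ∈ g}

/-- A relation on `X` is transitive. -/
def RelTrans {X : Type*} (f : Set (X × X)) : Prop :=
  ∀ x y z : X, (x, y) ∈ f → (y, z) ∈ f → (x, z) ∈ f

/-- `gRel f` is the smallest closed transitive relation containing `f`:
the intersection of all closed transitive relations containing `f`. -/
def gRel {X : Type*} [TopologicalSpace X] (f : Set (X × X)) : Set (X × X) :=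
  ⋂₀ {g : Set (X × X) | f ⊆ g ∧ IsClosed g ∧ RelTrans g}

/-! A closed relation avoiding `(x, x)` avoids `U ×ˢ U` for some compact neighbourhood `U` of `x`;
such a `U` is disjoint from its images under `F` and `F⁻¹`, and transitivity turns a common point
`y` of `F(U)` and `F⁻¹(U)`, i.e. `a F y F b` with `a, b ∈ U`, into a pair `(a, b) ∈ (U ×ˢ U) ∩ F`. -/

open Topology

section Relations

variable {X Y : Type*} {F : Set (X × Y)} {A : Set X} {B : Set Y}

theorem disjoint_relImage_of_disjoint_prod (h : Disjoint (A ×ˢ B) F) :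
    Disjoint B (relImage F A) := by
  rw [Set.disjoint_left]
  rintro b hb ⟨a, ha, hab⟩
  exact Set.disjoint_left.1 h (Set.mk_mem_prod ha hb) hab

theorem disjoint_relImage_relInv_of_disjoint_prod (h : Disjoint (A ×ˢ B) F) :
    Disjoint A (relImage (relInv F) B) := by
  rw [Set.disjoint_left]
  rintro a ha ⟨b, hb, hba⟩
  exact Set.disjoint_left.1 h (Set.mk_mem_prod ha hb) hba

end Relations

theorem RelTrans.disjoint_relImage_relImage_relInv {X : Type*} {F : Set (X × X)} {A B : Set X}
    (hF : RelTrans F) (h : Disjoint (A ×ˢ B) F) :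
    Disjoint (relImage F A) (relImage (relInv F) B) := by
  rw [Set.disjoint_left]
  rintro y ⟨a, ha, hay⟩ ⟨b, hb, hyb⟩
  exact Set.disjoint_left.1 h (Set.mk_mem_prod ha hb) (hF a y b hay hyb)

theorem exists_isCompact_mem_nhds_disjoint_prod {X : Type*} [TopologicalSpace X]
    [LocallyCompactSpace X] {F : Set (X × X)} (hF : IsClosed F) {x : X} (hx : (x, x) ∉ F) :
    ∃ U, IsCompact U ∧ U ∈ 𝓝 x ∧ Disjoint (U ×ˢ U) F := by
  have hFc : Fᶜ ∈ 𝓝 x ×ˢ 𝓝 x := nhds_prod_eq (x := x) (y := x) ▸ hF.isOpen_compl.mem_nhds hx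
  obtain ⟨V, hV, hVF⟩ := Filter.mem_prod_self_iff.1 hFc
  obtain ⟨U, hU, hUV, hUc⟩ := local_compact_nhds hV
  exact ⟨U, hUc, hU, Set.subset_compl_iff_disjoint_right.1 <|
    (Set.prod_mono hUV hUV).trans hVF⟩

theorem exists_compact_nhd_disjoint_images_general
    {X : Type*} [TopologicalSpace X] [LocallyCompactSpace X]
    (F : Set (X × X)) (hF : IsClosed F) (hFt : RelTrans F)
    (x : X) (hx : (x, x) ∉ F) :
    ∃ U : Set X, IsCompact U ∧ x ∈ interior U ∧
      Disjoint U (relImage F U) ∧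
      Disjoint U (relImage (relInv F) U) ∧
      Disjoint (relImage F U) (relImage (relInv F) U) := by
  obtain ⟨U, hUc, hU, hUF⟩ := exists_isCompact_mem_nhds_disjoint_prod hF hx
  exact ⟨U, hUc, mem_interior_iff_mem_nhds.2 hU, disjoint_relImage_of_disjoint_prod hUF,
    disjoint_relImage_relInv_of_disjoint_prod hUF, hFt.disjoint_relImage_relImage_relInv hUF⟩

/-- Let `F` be a closed transitive relation on a locally compact,
σ-compact Hausdorff space `X` and `x` a point with `(x,x) ∉ F`.  Then `x` has a
compact neighborhood `U` such that `U`, `F(U)` and `F⁻¹(U)` are pairwise disjoint. -/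
theorem exists_compact_nhd_disjoint_images
    {X : Type*} [TopologicalSpace X] [LocallyCompactSpace X]
    [SigmaCompactSpace X] [T2Space X]
    (F : Set (X × X)) (hF : IsClosed F) (hFt : RelTrans F)
    (x : X) (hx : (x, x) ∉ F) :
    ∃ U : Set X, IsCompact U ∧ x ∈ interior U ∧
      Disjoint U (relImage F U) ∧
      Disjoint U (relImage (relInv F) U) ∧
      Disjoint (relImage F U) (relImage (relInv F) U) :=
  exists_compact_nhd_disjoint_images_general F hF hFt x hx
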